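/- arXiv:1608.01766 — 2 statements merged into one kernel-verified Lean document; each statement's English description precedes it below -/
import Mathlib

section
/- Let t_1, …, t_m be independent with t_j ~ Exp(μ_j), where μ_j ≥ c·min{j, m+1−j} for some constant c > 0 and all 1 ≤ j ≤ m. Let T = Σ t_j. Then for every 0 < λ < c there is a constant C (depending only on c and λ, not on m) such that E[e^{λT}] ≤ exp(λ·Σ_j 1/μ_j + C). -/
open MeasureTheory ProbabilityTheory Finset

/-! By independence, `E[e^{λT}] = ∏ⱼ μⱼ / (μⱼ - λ)`, and
`μ / (μ - λ) = 1 + λ / (μ - λ) ≤ exp (λ / μ + λ² / (μ (μ - λ)))`.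
With `kⱼ = min{j, m+1-j}` and `μⱼ ≥ c kⱼ` the excess term is at most `λ² / (c (c - λ)) / kⱼ²`,
and `Σⱼ 1 / kⱼ² ≤ 2 Σⱼ 1 / j² ≤ 4` uniformly in `m`. -/

open Real in
lemma integral_exp_mul_expMeasure {r lam : ℝ} (hr : 0 < r) (hlam : lam < r) :
    ∫ x, exp (lam * x) ∂expMeasure r = r / (r - lam) := by
  have hdensity : ∀ x, exponentialPDFReal r x * exp (lam * x)
      = (Set.Ici 0).indicator (fun x => r * exp ((lam - r) * x)) x := by
    intro x
    by_cases hx : 0 ≤ x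
    · simp only [exponentialPDFReal, gammaPDFReal, if_pos hx, Set.indicator_of_mem
        (Set.mem_Ici.2 hx), rpow_one, Gamma_one, div_one, sub_self, rpow_zero, mul_one,
        mul_assoc, ← exp_add]
      ring_nf
    · simp [exponentialPDFReal, gammaPDFReal, hx]
  calc ∫ x, exp (lam * x) ∂expMeasure r
      = ∫ x, exponentialPDFReal r x * exp (lam * x) := by
        rw [expMeasure, gammaMeasure,
          integral_withDensity_eq_integral_toReal_smul (f := gammaPDF 1 r)
            (measurable_gammaPDFReal 1 r).ennreal_ofReal
            (ae_of_all _ fun _ => ENNReal.ofReal_lt_top)]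
        simp only [gammaPDF, ENNReal.toReal_ofReal (gammaPDFReal_nonneg one_pos hr _), smul_eq_mul,
          exponentialPDFReal]
    _ = ∫ x in Set.Ioi 0, r * exp ((lam - r) * x) := by
        simp_rw [hdensity]
        rw [integral_indicator measurableSet_Ici, integral_Ici_eq_integral_Ioi]
    _ = r / (r - lam) := by
        rw [integral_const_mul, integral_exp_mul_Ioi (by linarith) 0, mul_zero, exp_zero,
          neg_div, ← div_neg, neg_sub, mul_one_div]

lemma mgf_eq_of_map_eq_expMeasure {Ω : Type*} {_ : MeasurableSpace Ω} {P : Measure Ω}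
    {X : Ω → ℝ} {r lam : ℝ} (hX : AEMeasurable X P) (hXr : P.map X = expMeasure r)
    (hr : 0 < r) (hlam : lam < r) :
    mgf X P lam = r / (r - lam) := by
  rw [← mgf_id_map hX, hXr, ← integral_exp_mul_expMeasure hr hlam]
  rfl

open Real in
lemma div_sub_le_exp_of_mul_le {c k r lam : ℝ} (hlam : 0 < lam) (hlamc : lam < c)
    (hk : 1 ≤ k) (hr : c * k ≤ r) :
    r / (r - lam) ≤ exp (lam / r + lam ^ 2 / (c * (c - lam)) * (k ^ 2)⁻¹) := by
  have hc_lam : 0 < c - lam := by linarith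
  have hr_lam : 0 < r - lam := by nlinarith
  have hsub : k * (c - lam) ≤ r - lam := by nlinarith
  calc r / (r - lam) = lam / (r - lam) + 1 := by field_simp; ring
    _ ≤ exp (lam / (r - lam)) := add_one_le_exp _
    _ = exp (lam / r + lam ^ 2 / (r * (r - lam))) := by
        congr 1
        field_simp [show r ≠ 0 by linarith]
        ring
    _ ≤ exp (lam / r + lam ^ 2 / ((c * k) * (k * (c - lam)))) := by
        have : 0 < c * k := by nlinarith
        gcongr
        linarith
    _ = exp (lam / r + lam ^ 2 / (c * (c - lam)) * (k ^ 2)⁻¹) := by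
        congr 2
        field_simp

lemma sum_Icc_one_reflect {M : Type*} [AddCommMonoid M] (f : ℕ → M) (m : ℕ) :
    ∑ j ∈ Icc 1 m, f (m + 1 - j) = ∑ j ∈ Icc 1 m, f j :=
  sum_nbij' (fun j => m + 1 - j) (fun j => m + 1 - j)
    (fun j hj => by simp only [mem_Icc] at hj ⊢; omega)
    (fun j hj => by simp only [mem_Icc] at hj ⊢; omega)
    (fun j hj => by simp only [mem_Icc] at hj; omega)
    (fun j hj => by simp only [mem_Icc] at hj; omega)
    (fun _ _ => rfl)

lemma sum_Icc_inv_sq_le_two (m : ℕ) : ∑ j ∈ Icc 1 m, ((j : ℝ) ^ 2)⁻¹ ≤ 2 := by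
  have hIcc : Icc 1 m = Ioo 0 (m + 1) := by ext; simp [Nat.succ_le_iff]
  simpa [hIcc] using sum_Ioo_inv_sq_le (α := ℝ) 0 (m + 1)

lemma sum_Icc_inv_sq_min_le_four (m : ℕ) :
    ∑ j ∈ Icc 1 m, (((min j (m + 1 - j) : ℕ) : ℝ) ^ 2)⁻¹ ≤ 4 := by
  have hmin : ∀ j ∈ Icc 1 m, (((min j (m + 1 - j) : ℕ) : ℝ) ^ 2)⁻¹
      ≤ ((j : ℝ) ^ 2)⁻¹ + (((m + 1 - j : ℕ) : ℝ) ^ 2)⁻¹ := by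
    intro j _
    rcases min_choice j (m + 1 - j) with h | h <;> rw [h]
    · exact le_add_of_nonneg_right (by positivity)
    · exact le_add_of_nonneg_left (by positivity)
  calc _ ≤ ∑ j ∈ Icc 1 m, (((j : ℝ) ^ 2)⁻¹ + (((m + 1 - j : ℕ) : ℝ) ^ 2)⁻¹) := sum_le_sum hmin
    _ = 2 * ∑ j ∈ Icc 1 m, ((j : ℝ) ^ 2)⁻¹ := by
        rw [sum_add_distrib, sum_Icc_one_reflect (fun j => ((j : ℝ) ^ 2)⁻¹), two_mul]
    _ ≤ 4 := by linarith [sum_Icc_inv_sq_le_two m]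

theorem stmt_9_general (c : ℝ) (lam : ℝ) (hlam0 : 0 < lam) (hlamc : lam < c) :
    ∃ C : ℝ, ∀ (m : ℕ) (μ : ℕ → ℝ)
      (_ : ∀ j ∈ Finset.Icc 1 m, c * (min j (m + 1 - j) : ℕ) ≤ μ j)
      (Ω : Type) (_ : MeasurableSpace Ω) (P : Measure Ω) (_ : IsProbabilityMeasure P)
      (t : ℕ → Ω → ℝ) (_ : ∀ j, Measurable (t j))
      (_ : iIndepFun t P)
      (_ : ∀ j ∈ Finset.Icc 1 m, Measure.map (t j) P = expMeasure (μ j)),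
      ∫ ω, Real.exp (lam * ∑ j ∈ Finset.Icc 1 m, t j ω) ∂P
        ≤ Real.exp (lam * ∑ j ∈ Finset.Icc 1 m, 1 / μ j + C) := by
  set K := lam ^ 2 / (c * (c - lam))
  refine ⟨K * 4, fun m μ hμ Ω _ P _ t ht hindep hmap => ?_⟩
  set k : ℕ → ℝ := fun j => ((min j (m + 1 - j) : ℕ) : ℝ)
  have hmgf : ∀ j ∈ Icc 1 m, mgf (t j) P lam ≤ Real.exp (lam * (1 / μ j) + K * (k j ^ 2)⁻¹) := by
    intro j hj
    have hk : 1 ≤ k j := by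
      simp only [mem_Icc] at hj
      exact Nat.one_le_cast.2 (by omega)
    have hμ_lam : lam < μ j := by nlinarith [hμ j hj]
    rw [mgf_eq_of_map_eq_expMeasure (ht j).aemeasurable (hmap j hj) (by linarith) hμ_lam,
      mul_one_div]
    exact div_sub_le_exp_of_mul_le hlam0 hlamc hk (hμ j hj)
  calc ∫ ω, Real.exp (lam * ∑ j ∈ Icc 1 m, t j ω) ∂P
      = ∏ j ∈ Icc 1 m, mgf (t j) P lam := by
        rw [← hindep.mgf_sum ht]
        simp only [mgf, Finset.sum_apply]
    _ ≤ ∏ j ∈ Icc 1 m, Real.exp (lam * (1 / μ j) + K * (k j ^ 2)⁻¹) :=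
        prod_le_prod (fun _ _ => mgf_nonneg) hmgf
    _ = Real.exp (lam * ∑ j ∈ Icc 1 m, 1 / μ j + K * ∑ j ∈ Icc 1 m, (k j ^ 2)⁻¹) := by
        rw [← Real.exp_sum, sum_add_distrib, mul_sum, mul_sum]
    _ ≤ Real.exp (lam * ∑ j ∈ Icc 1 m, 1 / μ j + K * 4) := by
        have : 0 ≤ K := div_nonneg (sq_nonneg lam) (by nlinarith)
        gcongr
        exact sum_Icc_inv_sq_min_le_four m

/-- If `t_j ~ Exp(μ_j)` are independent with `μ_j ≥ c·min{j, m+1−j}`, then for each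
`0 < λ < c` there is a constant `C` (depending only on `c` and `λ`, not on `m` or the
probability space) with `E[e^{λT}] ≤ exp(λ Σ_j 1/μ_j + C)` for `T = Σ_j t_j`. -/
theorem stmt_9 (c : ℝ) (hc : 0 < c) (lam : ℝ) (hlam0 : 0 < lam) (hlamc : lam < c) :
    ∃ C : ℝ, ∀ (m : ℕ) (μ : ℕ → ℝ)
      (_ : ∀ j ∈ Finset.Icc 1 m, c * (min j (m + 1 - j) : ℕ) ≤ μ j)
      (Ω : Type) (_ : MeasurableSpace Ω) (P : Measure Ω) (_ : IsProbabilityMeasure P)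
      (t : ℕ → Ω → ℝ) (_ : ∀ j, Measurable (t j))
      (_ : iIndepFun t P)
      (_ : ∀ j ∈ Finset.Icc 1 m, Measure.map (t j) P = expMeasure (μ j)),
      ∫ ω, Real.exp (lam * ∑ j ∈ Finset.Icc 1 m, t j ω) ∂P
        ≤ Real.exp (lam * ∑ j ∈ Finset.Icc 1 m, 1 / μ j + C) :=
  stmt_9_general c lam hlam0 hlamc
end

section
/- Fix constants c > 1 and define ε(n) = (24·ln(ln n)/ln n)^{1/2}. For n sufficiently large and any s with ln(n) ≤ s ≤ n/2, the quantity (2/(c·s²))·(n/ln n)·exp(s·(ln(e·c·ln n) − (c·ε(n)²/3)·((n−s)/n)·ln n)) is at most 2n·e^{−2s·ln ln n}. -/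
open Real

/-- The analytic estimate at the heart of Lemma 4: with
`ε(n)² = 24 ln ln(n)/ln(n)`, for `n` large and `ln n ≤ s ≤ n/2`,
`(2/(c s²))·(n/ln n)·exp(s(ln(e c ln n) − (c ε(n)²/3)((n−s)/n) ln n)) ≤ 2n e^{−2s ln ln n}`. -/
theorem stmt_16 (c : ℝ) (hc : 1 < c) :
    ∃ N : ℕ, ∀ n : ℕ, N ≤ n → ∀ s : ℝ, Real.log n ≤ s → s ≤ (n : ℝ) / 2 →
      (2 / (c * s ^ 2)) * ((n : ℝ) / Real.log n) *
        Real.exp (s * (Real.log (Real.exp 1 * c * Real.log n)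
          - (c * ((Real.sqrt (24 * Real.log (Real.log n) / Real.log n)) ^ 2) / 3)
              * (((n : ℝ) - s) / n) * Real.log n))
      ≤ 2 * n * Real.exp (-2 * s * Real.log (Real.log n)) := by
  have hc0 : (0:ℝ) < c := by linarith
  have hlc : 0 < Real.log c := Real.log_pos hc
  refine ⟨⌈Real.exp (Real.exp (2 + Real.log c))⌉₊ + 1, fun n hn s hs1 hs2 => ?_⟩
  have hnx : Real.exp (Real.exp (2 + Real.log c)) ≤ (n:ℝ) := by
    calc Real.exp (Real.exp (2 + Real.log c))
        ≤ (⌈Real.exp (Real.exp (2 + Real.log c))⌉₊ : ℝ) := Nat.le_ceil _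
      _ ≤ n := by exact_mod_cast Nat.le_of_succ_le hn
  have hn0 : (0:ℝ) < n := lt_of_lt_of_le (Real.exp_pos _) hnx
  have hL : Real.exp (2 + Real.log c) ≤ Real.log n := by
    have h := Real.log_le_log (Real.exp_pos _) hnx
    rwa [Real.log_exp] at h
  have hL1 : (1:ℝ) ≤ Real.log n := by
    refine le_trans ?_ hL
    rw [← Real.exp_zero]
    exact Real.exp_le_exp.mpr (by linarith)
  have hL0 : (0:ℝ) < Real.log n := by linarith
  set A := Real.log (Real.log n) with hAdef
  have hA : 2 + Real.log c ≤ A := by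
    rw [hAdef, ← Real.log_exp (2 + Real.log c)]
    exact Real.log_le_log (Real.exp_pos _) hL
  have hA0 : (0:ℝ) < A := by linarith
  have hs0 : (1:ℝ) ≤ s := le_trans hL1 hs1
  have hsq : (Real.sqrt (24 * A / Real.log n)) ^ 2 = 24 * A / Real.log n :=
    Real.sq_sqrt (by positivity)
  rw [hsq]
  -- bound the exponent
  have hlog3 : Real.log (Real.exp 1 * c * Real.log n) = 1 + Real.log c + A := by
    rw [Real.log_mul (by positivity) (by positivity),
        Real.log_mul (by positivity) (by positivity), Real.log_exp]
  have hT : (c * (24 * A / Real.log n) / 3) * (((n:ℝ) - s) / n) * Real.log n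
      = 8 * c * A * (((n:ℝ) - s) / n) := by
    field_simp
    ring
  have hfrac : (1:ℝ)/2 ≤ ((n:ℝ) - s) / n := by
    rw [le_div_iff₀ hn0]
    linarith
  have hexp : s * (Real.log (Real.exp 1 * c * Real.log n)
      - (c * (24 * A / Real.log n) / 3) * (((n:ℝ) - s) / n) * Real.log n)
      ≤ -2 * s * A := by
    rw [hlog3, hT]
    have h1 : 4 * A ≤ 8 * c * A * (((n:ℝ) - s) / n) := by
      have : 4 * c * A ≤ 8 * c * A * (((n:ℝ) - s) / n) := by
        have := mul_le_mul_of_nonneg_left hfrac (by positivity : (0:ℝ) ≤ 8 * c * A)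
        linarith
      nlinarith
    have h2 : 1 + Real.log c + A - 8 * c * A * (((n:ℝ) - s) / n) ≤ -2 * A := by
      linarith
    calc s * (1 + Real.log c + A - 8 * c * A * (((n:ℝ) - s) / n))
        ≤ s * (-2 * A) := by
          exact mul_le_mul_of_nonneg_left h2 (by linarith)
      _ = -2 * s * A := by ring
  have hpre : 2 / (c * s ^ 2) * ((n:ℝ) / Real.log n) ≤ 2 * n := by
    have h1 : 2 / (c * s ^ 2) ≤ 2 := by
      rw [div_le_iff₀ (by positivity)]
      nlinarith
    have h2 : (n:ℝ) / Real.log n ≤ n := by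
      rw [div_le_iff₀ hL0]
      nlinarith
    calc 2 / (c * s ^ 2) * ((n:ℝ) / Real.log n) ≤ 2 * ((n:ℝ) / Real.log n) := by
          exact mul_le_mul_of_nonneg_right h1 (by positivity)
      _ ≤ 2 * n := by linarith
  calc 2 / (c * s ^ 2) * ((n:ℝ) / Real.log n) *
        Real.exp (s * (Real.log (Real.exp 1 * c * Real.log n)
          - (c * (24 * A / Real.log n) / 3) * (((n:ℝ) - s) / n) * Real.log n))
      ≤ 2 * n * Real.exp (-2 * s * A) := by
        exact mul_le_mul hpre (Real.exp_le_exp.mpr hexp) (Real.exp_pos _).le (by positivity)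
    _ = 2 * n * Real.exp (-2 * s * A) := rfl
end
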